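/- Let a, b, y be points of the hyperbolic plane ℍ with b ≠ a and b ≠ y. Suppose that for every point p on the geodesic segment from b to y (i.e., every p with dist b p + dist p y = dist b y) one has dist a b ≤ dist a p. Then cosh(dist a y) ≥ cosh(dist a b)·cosh(dist b y); equivalently, the angle at b between the segments [b,a] and [b,y] is at least π/2. -/

import Mathlib

/-!
Map `ℍ` isometrically onto the hyperboloid `x₀² - x₁² - x₂² = 1`, where `cosh (dist z w)` is the
Minkowski product of the images. With `L = dist b y`, the point of `[b, y]` at distance `t` from
`b` is `(sinh (L - t) • b + sinh t • y) / sinh L` there, so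
`sinh L * cosh (dist a p) = sinh (L - t) * cosh (dist a b) + sinh t * cosh (dist a y)`.
Minimality of `dist a b` turns this into
`cosh (dist a b) * (sinh L - sinh (L - t)) ≤ sinh t * cosh (dist a y)`, and dividing by `t` and
letting `t → 0` gives `cosh (dist a b) * cosh L ≤ cosh (dist a y)`.
-/

open Real Set

theorem Real.sinh_sub_sinh_sub_two_mul (x s : ℝ) :
    sinh x - sinh (x - 2 * s) = 2 * sinh s * cosh (x - s) := by
  have h₁ := sinh_add (x - s) s
  have h₂ := sinh_sub (x - s) s
  rw [sub_add_cancel] at h₁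
  rw [sub_sub, ← two_mul] at h₂
  linarith

namespace UpperHalfPlane

noncomputable section

def minkowski (u v : ℝ × ℝ × ℝ) : ℝ := u.1 * v.1 - u.2.1 * v.2.1 - u.2.2 * v.2.2

theorem minkowski_smul_add_smul_left (α β : ℝ) (u v w : ℝ × ℝ × ℝ) :
    minkowski (α • u + β • v) w = α * minkowski u w + β * minkowski v w := by
  simp only [minkowski, Prod.fst_add, Prod.snd_add, Prod.smul_fst, Prod.smul_snd, smul_eq_mul]
  ring

theorem minkowski_smul_add_smul_right (α β : ℝ) (u v w : ℝ × ℝ × ℝ) :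
    minkowski w (α • u + β • v) = α * minkowski w u + β * minkowski w v := by
  simp only [minkowski, Prod.fst_add, Prod.snd_add, Prod.smul_fst, Prod.smul_snd, smul_eq_mul]
  ring

def toHyperboloid (z : ℍ) : ℝ × ℝ × ℝ :=
  ((z.re ^ 2 + z.im ^ 2 + 1) / (2 * z.im), z.re / z.im, (z.re ^ 2 + z.im ^ 2 - 1) / (2 * z.im))

theorem cosh_dist_eq_minkowski (z w : ℍ) :
    cosh (dist z w) = minkowski (toHyperboloid z) (toHyperboloid w) := by
  have := z.im_pos
  have := w.im_pos
  rw [cosh_dist, Complex.dist_eq, Complex.sq_norm, Complex.normSq_apply]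
  simp only [minkowski, toHyperboloid, Complex.sub_re, Complex.sub_im, coe_re, coe_im]
  field_simp
  ring

theorem minkowski_toHyperboloid_self (z : ℍ) :
    minkowski (toHyperboloid z) (toHyperboloid z) = 1 := by
  rw [← cosh_dist_eq_minkowski, dist_self, cosh_zero]

theorem toHyperboloid_fst_sub_snd_snd (z : ℍ) :
    (toHyperboloid z).1 - (toHyperboloid z).2.2 = z.im⁻¹ := by
  have := z.im_pos
  simp only [toHyperboloid]
  field_simp
  ring

theorem exists_toHyperboloid_eq {u : ℝ × ℝ × ℝ} (hu : minkowski u u = 1)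
    (hpos : 0 < u.1 - u.2.2) : ∃ z : ℍ, toHyperboloid z = u := by
  obtain ⟨u₀, u₁, u₂⟩ := u
  simp only [minkowski] at hu hpos
  refine ⟨mk ⟨u₁ / (u₀ - u₂), (u₀ - u₂)⁻¹⟩ (inv_pos.2 hpos), ?_⟩
  simp only [toHyperboloid, re, im, Prod.mk.injEq]
  refine ⟨?_, ?_, ?_⟩ <;> field_simp <;> linear_combination (-1 : ℝ) * hu

theorem exists_forall_cosh_dist_eq_mul_add_mul (b y : ℍ) {α β : ℝ} (hα : 0 ≤ α) (hβ : 0 ≤ β)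
    (h : α ^ 2 + β ^ 2 + 2 * α * β * cosh (dist b y) = 1) :
    ∃ p : ℍ, ∀ w, cosh (dist p w) = α * cosh (dist b w) + β * cosh (dist y w) := by
  set u := α • toHyperboloid b + β • toHyperboloid y
  have hu : minkowski u u = 1 := by
    simp only [u, minkowski_smul_add_smul_left, minkowski_smul_add_smul_right,
      minkowski_toHyperboloid_self, ← cosh_dist_eq_minkowski, dist_comm y b]
    linear_combination h
  have hpos : 0 < u.1 - u.2.2 := by
    have hαβ : 0 < α ∨ 0 < β := by
      by_contra! h0
      simp [le_antisymm h0.1 hα, le_antisymm h0.2 hβ] at h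
    have hu' : u.1 - u.2.2 = α * b.im⁻¹ + β * y.im⁻¹ := by
      simp only [u, Prod.fst_add, Prod.snd_add, Prod.smul_fst, Prod.smul_snd, smul_eq_mul]
      linear_combination α * toHyperboloid_fst_sub_snd_snd b + β * toHyperboloid_fst_sub_snd_snd y
    rw [hu']
    rcases hαβ with hα' | hβ'
    · exact add_pos_of_pos_of_nonneg (by positivity) (by positivity)
    · exact add_pos_of_nonneg_of_pos (by positivity) (by positivity)
  obtain ⟨p, hp⟩ := exists_toHyperboloid_eq hu hpos
  refine ⟨p, fun w => ?_⟩
  rw [cosh_dist_eq_minkowski, hp, minkowski_smul_add_smul_left, cosh_dist_eq_minkowski,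
    cosh_dist_eq_minkowski]

theorem exists_dist_eq_and_sinh_mul_cosh_dist_eq (b y : ℍ) (hby : b ≠ y) {t : ℝ}
    (ht : t ∈ Icc 0 (dist b y)) :
    ∃ p : ℍ, dist b p = t ∧ dist p y = dist b y - t ∧
      ∀ w, sinh (dist b y) * cosh (dist p w) =
        sinh (dist b y - t) * cosh (dist b w) + sinh t * cosh (dist y w) := by
  set L := dist b y with hLdef
  have hL : 0 < sinh L := sinh_pos_iff.2 (dist_pos.2 hby)
  have hsub : sinh (L - t) = sinh L * cosh t - cosh L * sinh t := sinh_sub L t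
  obtain ⟨p, hp⟩ := exists_forall_cosh_dist_eq_mul_add_mul b y (α := sinh (L - t) / sinh L)
    (β := sinh t / sinh L) (div_nonneg (sinh_nonneg_iff.2 (by linarith [ht.2])) hL.le)
    (div_nonneg (sinh_nonneg_iff.2 ht.1) hL.le) (by
      field_simp
      rw [hsub]
      linear_combination sinh L ^ 2 * cosh_sq t - sinh t ^ 2 * cosh_sq L)
  have hp' : ∀ w, sinh L * cosh (dist p w) =
      sinh (L - t) * cosh (dist b w) + sinh t * cosh (dist y w) := fun w => by
    rw [hp w]; field_simp
  refine ⟨p, cosh_injOn dist_nonneg ht.1 ?_, cosh_injOn dist_nonneg (sub_nonneg.2 ht.2) ?_, hp'⟩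
  · have hpb := hp' b
    rw [dist_self, cosh_zero, dist_comm y b, ← hLdef, hsub] at hpb
    refine mul_left_cancel₀ hL.ne' ?_
    rw [dist_comm, hpb]
    ring
  · have hpy := hp' y
    rw [dist_self, cosh_zero, ← hLdef, hsub] at hpy
    refine mul_left_cancel₀ hL.ne' ?_
    rw [hpy, cosh_sub]
    linear_combination -sinh t * cosh_sq L

end

end UpperHalfPlane

theorem hyperbolic_obtuse_angle_of_min_dist_general
    (a b y : UpperHalfPlane) (hby : b ≠ y)
    (hmin : ∀ p : UpperHalfPlane, dist b p + dist p y = dist b y → dist a b ≤ dist a p) :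
    Real.cosh (dist a y) ≥ Real.cosh (dist a b) * Real.cosh (dist b y) := by
  have hL : 0 < dist b y := dist_pos.2 hby
  have key : ∀ s ∈ Ioo 0 (dist b y / 2),
      cosh (dist a b) * cosh (dist b y - s) ≤ cosh (dist a y) * cosh s := by
    intro s hs
    obtain ⟨p, hbp, hpy, hp⟩ := UpperHalfPlane.exists_dist_eq_and_sinh_mul_cosh_dist_eq b y hby
      (t := 2 * s) ⟨by linarith [hs.1], by linarith [hs.2]⟩
    have hap : cosh (dist a b) ≤ cosh (dist p a) := by
      rw [dist_comm p a]
      exact (cosh_strictMonoOn.le_iff_le dist_nonneg dist_nonneg).2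
        (hmin p (by rw [hbp, hpy]; ring))
    have hpa := hp a
    rw [dist_comm b a, dist_comm y a] at hpa
    -- dividing by `2 * sinh s` instead of `t = 2 * s` leaves an expression continuous at `s = 0`
    refine le_of_mul_le_mul_left ?_ (mul_pos two_pos (sinh_pos_iff.2 hs.1))
    calc 2 * sinh s * (cosh (dist a b) * cosh (dist b y - s))
        = sinh (dist b y) * cosh (dist a b) - sinh (dist b y - 2 * s) * cosh (dist a b) := by
          linear_combination -cosh (dist a b) * sinh_sub_sinh_sub_two_mul (dist b y) s
      _ ≤ sinh (dist b y) * cosh (dist p a) - sinh (dist b y - 2 * s) * cosh (dist a b) := by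
          gcongr
      _ = 2 * sinh s * (cosh (dist a y) * cosh s) := by
          rw [hpa, sinh_two_mul]; ring
  have h0 : (0 : ℝ) ∈ closure (Ioo 0 (dist b y / 2)) := by
    rw [closure_Ioo (by positivity)]
    exact ⟨le_rfl, by positivity⟩
  simpa [mul_comm] using ContinuousWithinAt.closure_le h0 (by fun_prop) (by fun_prop) key

/-- In the hyperbolic plane, if `b ≠ a`, `b ≠ y`, and `dist a b ≤ dist a p` for every point
`p` on the geodesic segment from `b` to `y`, then
`cosh (dist a y) ≥ cosh (dist a b) * cosh (dist b y)`, i.e. the angle at `b` between the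
segments `[b,a]` and `[b,y]` is at least `π/2`. -/
theorem hyperbolic_obtuse_angle_of_min_dist
    (a b y : UpperHalfPlane) (hba : b ≠ a) (hby : b ≠ y)
    (hmin : ∀ p : UpperHalfPlane, dist b p + dist p y = dist b y → dist a b ≤ dist a p) :
    Real.cosh (dist a y) ≥ Real.cosh (dist a b) * Real.cosh (dist b y) :=
  hyperbolic_obtuse_angle_of_min_dist_general a b y hby hmin
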